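/- Under the hypotheses of the energy-momentum transformation proposition: with $e, p_i$ and $\bar{e}, \bar{p}_i$ defined via an element $A \in O(3,1)$ as above, one has the invariance $\bar{e}^2 - \sum_{i=1}^3 \bar{p}_i^2 = e^2 - \sum_{i=1}^3 p_i^2$. -/
import Mathlib

open Matrix MeasureTheory
open scoped BigOperators

noncomputable section

abbrev E3 := EuclideanSpace ℝ (Fin 3)

def sphereVol : Measure E3 := (μH[2]).restrict (Metric.sphere (0 : E3) 1)

def minkowskiEta : Matrix (Fin 4) (Fin 4) ℝ := Matrix.diagonal ![-1, 1, 1, 1]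

lemma etaB (A : Matrix (Fin 4) (Fin 4) ℝ)
    (hA : Aᵀ * minkowskiEta * A = minkowskiEta) :
    A * minkowskiEta * Aᵀ = minkowskiEta := by
  have hη2 : minkowskiEta * minkowskiEta = 1 := by
    ext i j
    fin_cases i <;> fin_cases j <;>
      simp [minkowskiEta, Matrix.mul_apply, Fin.sum_univ_four, Matrix.one_apply]
  have h1 : (minkowskiEta * Aᵀ * minkowskiEta) * A = 1 := by
    calc (minkowskiEta * Aᵀ * minkowskiEta) * A
        = minkowskiEta * (Aᵀ * minkowskiEta * A) := by
          simp [Matrix.mul_assoc]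
      _ = 1 := by rw [hA, hη2]
  have h2 : A * (minkowskiEta * Aᵀ * minkowskiEta) = 1 := mul_eq_one_comm.mpr h1
  calc A * minkowskiEta * Aᵀ
      = A * (minkowskiEta * Aᵀ * minkowskiEta) * minkowskiEta := by
        simp [Matrix.mul_assoc, hη2]
    _ = minkowskiEta := by rw [h2, Matrix.one_mul]

lemma sphere_sum_sq {x : E3} (hx : x ∈ Metric.sphere (0 : E3) 1) :
    ∑ i : Fin 3, (x i) ^ 2 = 1 := by
  have hn : ‖x‖ = 1 := by simpa using hx
  have := EuclideanSpace.norm_eq x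
  rw [hn] at this
  have h2 : ∑ i : Fin 3, ‖x i‖ ^ 2 = 1 := by
    have hnn : 0 ≤ ∑ i : Fin 3, ‖x i‖ ^ 2 :=
      Finset.sum_nonneg fun i _ => sq_nonneg _
    nlinarith [Real.sq_sqrt hnn]
  simpa [Real.norm_eq_abs, sq_abs] using h2

lemma coord_bound {x : E3} (hx : x ∈ Metric.sphere (0 : E3) 1) (k : Fin 3) :
    ‖x k‖ ≤ 1 := by
  have h1 := sphere_sum_sq hx
  have h2 : (x k) ^ 2 ≤ 1 := by
    rw [← h1]
    exact Finset.single_le_sum (f := fun i => (x i)^2) (fun i _ => sq_nonneg _)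
      (Finset.mem_univ k)
  rw [Real.norm_eq_abs]
  nlinarith [abs_nonneg (x k), sq_abs (x k)]

lemma lin_int (μ : E3 → ℝ) (hμ : Integrable μ sphereVol)
    (I0 : Integrable (fun x => μ x * x 0) sphereVol)
    (I1 : Integrable (fun x => μ x * x 1) sphereVol)
    (I2 : Integrable (fun x => μ x * x 2) sphereVol)
    (c0 c1 c2 c3 : ℝ) :
    ∫ x, (c0 * μ x + (c1 * (μ x * x 0) + (c2 * (μ x * x 1) + c3 * (μ x * x 2)))) ∂sphereVol
      = c0 * (∫ x, μ x ∂sphereVol) + (c1 * (∫ x, μ x * x 0 ∂sphereVol)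
        + (c2 * (∫ x, μ x * x 1 ∂sphereVol) + c3 * (∫ x, μ x * x 2 ∂sphereVol))) := by
  have h1 : Integrable (fun x => c2 * (μ x * x 1) + c3 * (μ x * x 2)) sphereVol :=
    (I1.const_mul c2).add (I2.const_mul c3)
  have h2 : Integrable (fun x => c1 * (μ x * x 0)
      + (c2 * (μ x * x 1) + c3 * (μ x * x 2))) sphereVol :=
    (I0.const_mul c1).add h1
  rw [integral_add (hμ.const_mul c0) h2, integral_add (I0.const_mul c1) h1,
    integral_add (I1.const_mul c2) (I2.const_mul c3),
    integral_const_mul, integral_const_mul, integral_const_mul, integral_const_mul]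

lemma main (A : Matrix (Fin 4) (Fin 4) ℝ)
    (hA : Aᵀ * minkowskiEta * A = minkowskiEta) (hα₀ : 0 < A 0 0)
    (μ : E3 → ℝ) (hμ : Integrable μ sphereVol) :
    (∫ x, ((A 0 0 + ∑ j : Fin 3, A j.succ 0 * x j)⁻¹)⁻¹ * μ x ∂sphereVol) ^ 2
      - ∑ i : Fin 3, (∫ x, ((A 0 0 + ∑ j : Fin 3, A j.succ 0 * x j)⁻¹)⁻¹ * μ x *
          ((A 0 0 + ∑ j : Fin 3, A j.succ 0 * x j)⁻¹
            * (A 0 i.succ + ∑ k : Fin 3, A k.succ i.succ * x k)) ∂sphereVol) ^ 2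
    = (∫ x, μ x ∂sphereVol) ^ 2 - ∑ i : Fin 3, (∫ x, μ x * x i ∂sphereVol) ^ 2 := by
  have s0 : ((0 : Fin 3)).succ = (1 : Fin 4) := rfl
  have s1 : ((1 : Fin 3)).succ = (2 : Fin 4) := rfl
  have s2 : ((2 : Fin 3)).succ = (3 : Fin 4) := rfl
  -- column relation (0,0) from hA
  have F00 : -(A 0 0 * A 0 0) + A 1 0 * A 1 0 + A 2 0 * A 2 0 + A 3 0 * A 3 0 = -1 := by
    have := congrFun (congrFun hA 0) 0
    simp [Matrix.mul_apply, minkowskiEta, Fin.sum_univ_four, Matrix.diagonal] at this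
    linarith
  -- row relations from A * η * Aᵀ = η
  have E : ∀ i j : Fin 4,
      -(A i 0 * A j 0) + A i 1 * A j 1 + A i 2 * A j 2 + A i 3 * A j 3
        = minkowskiEta i j := by
    intro i j
    have := congrFun (congrFun (etaB A hA) i) j
    simp [Matrix.mul_apply, minkowskiEta, Fin.sum_univ_four, Matrix.diagonal] at this ⊢
    linarith
  -- positivity on the sphere
  have key : ∀ x ∈ Metric.sphere (0 : E3) 1,
      0 < A 0 0 + ∑ j : Fin 3, A j.succ 0 * x j := by
    intro x hx
    have hcs := Finset.sum_mul_sq_le_sq_mul_sq Finset.univ (fun j : Fin 3 => A j.succ 0)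
      (fun j => x j)
    rw [sphere_sum_sq hx, mul_one] at hcs
    have hsq : ∑ j : Fin 3, (A j.succ 0) ^ 2 = A 0 0 ^ 2 - 1 := by
      rw [Fin.sum_univ_three, s0, s1, s2]; nlinarith [F00]
    have h3 : (∑ j : Fin 3, A j.succ 0 * x j) ^ 2 ≤ A 0 0 ^ 2 - 1 := hsq ▸ hcs
    nlinarith [h3, hα₀, sq_nonneg (A 0 0 + ∑ j : Fin 3, A j.succ 0 * x j)]
  have hpos : ∀ᵐ x ∂sphereVol, 0 < A 0 0 + ∑ j : Fin 3, A j.succ 0 * x j := by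
    unfold sphereVol
    filter_upwards [ae_restrict_mem Metric.isClosed_sphere.measurableSet] with x hx
      using key x hx
  -- integrability
  have Ik : ∀ k : Fin 3, Integrable (fun x => μ x * x k) sphereVol := by
    intro k
    have hm : AEStronglyMeasurable (fun x : E3 => x k) sphereVol :=
      (EuclideanSpace.proj (𝕜 := ℝ) k).continuous.aestronglyMeasurable
    have hb : ∀ᵐ x ∂sphereVol, ‖x k‖ ≤ 1 := by
      unfold sphereVol
      filter_upwards [ae_restrict_mem Metric.isClosed_sphere.measurableSet] with x hx
        using coord_bound hx k
    have := hμ.bdd_mul (c := 1) hm hb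
    simpa [mul_comm] using this
  -- the transformed energy
  have hebar : (∫ x, ((A 0 0 + ∑ j : Fin 3, A j.succ 0 * x j)⁻¹)⁻¹ * μ x ∂sphereVol)
      = A 0 0 * (∫ x, μ x ∂sphereVol) + (A 1 0 * (∫ x, μ x * x 0 ∂sphereVol)
        + (A 2 0 * (∫ x, μ x * x 1 ∂sphereVol) + A 3 0 * (∫ x, μ x * x 2 ∂sphereVol))) := by
    rw [← lin_int μ hμ (Ik 0) (Ik 1) (Ik 2)]
    refine integral_congr_ae (Filter.Eventually.of_forall fun x => ?_)
    simp only [inv_inv, Fin.sum_univ_three, s0, s1, s2]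
    ring
  -- the transformed momenta
  have hpbar : ∀ i : Fin 3,
      (∫ x, ((A 0 0 + ∑ j : Fin 3, A j.succ 0 * x j)⁻¹)⁻¹ * μ x *
          ((A 0 0 + ∑ j : Fin 3, A j.succ 0 * x j)⁻¹
            * (A 0 i.succ + ∑ k : Fin 3, A k.succ i.succ * x k)) ∂sphereVol)
      = A 0 i.succ * (∫ x, μ x ∂sphereVol) + (A 1 i.succ * (∫ x, μ x * x 0 ∂sphereVol)
        + (A 2 i.succ * (∫ x, μ x * x 1 ∂sphereVol)
          + A 3 i.succ * (∫ x, μ x * x 2 ∂sphereVol))) := by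
    intro i
    rw [← lin_int μ hμ (Ik 0) (Ik 1) (Ik 2)]
    refine integral_congr_ae ?_
    filter_upwards [hpos] with x hx
    have hb : A 0 0 + ∑ j : Fin 3, A j.succ 0 * x j ≠ 0 := ne_of_gt hx
    simp only [inv_inv, Fin.sum_univ_three, s0, s1, s2] at hb ⊢
    field_simp
    ring
  rw [Fin.sum_univ_three, Fin.sum_univ_three, hebar, hpbar 0, hpbar 1, hpbar 2, s0, s1, s2]
  set q0 : ℝ := ∫ x, μ x ∂sphereVol
  set q1 : ℝ := ∫ x, μ x * x 0 ∂sphereVol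
  set q2 : ℝ := ∫ x, μ x * x 1 ∂sphereVol
  set q3 : ℝ := ∫ x, μ x * x 2 ∂sphereVol
  have E00 : -(A 0 0 * A 0 0) + A 0 1 * A 0 1 + A 0 2 * A 0 2 + A 0 3 * A 0 3 = -1 := by
    simpa [minkowskiEta] using E 0 0
  have E11 : -(A 1 0 * A 1 0) + A 1 1 * A 1 1 + A 1 2 * A 1 2 + A 1 3 * A 1 3 = 1 := by
    simpa [minkowskiEta] using E 1 1
  have E22 : -(A 2 0 * A 2 0) + A 2 1 * A 2 1 + A 2 2 * A 2 2 + A 2 3 * A 2 3 = 1 := by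
    simpa [minkowskiEta] using E 2 2
  have E33 : -(A 3 0 * A 3 0) + A 3 1 * A 3 1 + A 3 2 * A 3 2 + A 3 3 * A 3 3 = 1 := by
    simpa [minkowskiEta] using E 3 3
  have E01 : -(A 0 0 * A 1 0) + A 0 1 * A 1 1 + A 0 2 * A 1 2 + A 0 3 * A 1 3 = 0 := by
    simpa [minkowskiEta] using E 0 1
  have E02 : -(A 0 0 * A 2 0) + A 0 1 * A 2 1 + A 0 2 * A 2 2 + A 0 3 * A 2 3 = 0 := by
    simpa [minkowskiEta] using E 0 2
  have E03 : -(A 0 0 * A 3 0) + A 0 1 * A 3 1 + A 0 2 * A 3 2 + A 0 3 * A 3 3 = 0 := by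
    simpa [minkowskiEta] using E 0 3
  have E12 : -(A 1 0 * A 2 0) + A 1 1 * A 2 1 + A 1 2 * A 2 2 + A 1 3 * A 2 3 = 0 := by
    simpa [minkowskiEta] using E 1 2
  have E13 : -(A 1 0 * A 3 0) + A 1 1 * A 3 1 + A 1 2 * A 3 2 + A 1 3 * A 3 3 = 0 := by
    simpa [minkowskiEta] using E 1 3
  have E23 : -(A 2 0 * A 3 0) + A 2 1 * A 3 1 + A 2 2 * A 3 2 + A 2 3 * A 3 3 = 0 := by
    simpa [minkowskiEta] using E 2 3
  linear_combination (-q0^2) * E00 - 2*q0*q1 * E01 - 2*q0*q2 * E02 - 2*q0*q3 * E03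
    - q1^2 * E11 - 2*q1*q2 * E12 - 2*q1*q3 * E13 - q2^2 * E22 - 2*q2*q3 * E23 - q3^2 * E33

/-- Lorentz invariance of the Bondi–Sachs mass: with `e, pᵢ` the energy-momentum of
`μ` and `ē, p̄ᵢ` the transformed energy-momentum under a boost `A ∈ O(3,1)`
(with `ē = ∫ K⁻¹ μ dv_σ`, `p̄ᵢ = ∫ K⁻¹ μ Ȳᵢ dv_σ`), one has
`ē² - ∑ p̄ᵢ² = e² - ∑ pᵢ²`. -/
theorem mass_invariance (A : Matrix (Fin 4) (Fin 4) ℝ)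
    (hA : Aᵀ * minkowskiEta * A = minkowskiEta) (hα₀ : 0 < A 0 0)
    (μ : E3 → ℝ) (hμ : Integrable μ sphereVol) :
    let K : E3 → ℝ := fun x => (A 0 0 + ∑ j : Fin 3, A j.succ 0 * x j)⁻¹
    let Ybar : Fin 3 → E3 → ℝ := fun i x =>
      K x * (A 0 i.succ + ∑ k : Fin 3, A k.succ i.succ * x k)
    let e : ℝ := ∫ x, μ x ∂sphereVol
    let p : Fin 3 → ℝ := fun k => ∫ x, μ x * x k ∂sphereVol
    let ebar : ℝ := ∫ x, (K x)⁻¹ * μ x ∂sphereVol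
    let pbar : Fin 3 → ℝ := fun i => ∫ x, (K x)⁻¹ * μ x * Ybar i x ∂sphereVol
    ebar ^ 2 - ∑ i : Fin 3, (pbar i) ^ 2 = e ^ 2 - ∑ i : Fin 3, (p i) ^ 2 := by
  intro K Ybar e p ebar pbar
  exact main A hA hα₀ μ hμ

end
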